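/- Let g, g0, h, k be as follows: g a compact Lie algebra with Ad-invariant inner product g0, h and k orthogonal subspaces with [h,k] = 0. Let j, j' : h → k be linear maps with transposes j^t, j'^t : g → h. Suppose φ : g → g is a linear isometry of g0 such that φ(h) = h, φ(k) = k, and φ maps the g_j-orthogonal complement of h onto the g_{j'}-orthogonal complement of h, where g_j = (Id + j^t)^* g0 and g_{j'} = (Id + j'^t)^* g0. Let C = φ|_h ∈ O(h). If for every X ∈ k the vector φ(X) − C(j^t(X)) lies in the g_{j'}-orthogonal complement of h, then C ∘ j^t = j'^t ∘ φ on k, and consequently j(z) = φ^{-1}( j'(C z) ) for all z ∈ h. -/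

import Mathlib

open scoped RealInnerProductSpace

/-!
`jt'` kills `h`, because `j'` takes values in `k ⟂ h`. Hence for `X ∈ k` the condition on
`φ X - C (jt X)` collapses to `⟪jt' (φ X) - C (jt X), Z⟫ = 0` for all `Z ∈ h`, which is the first
claim. For the second, `φ (j z)` and `j' (C z)` have the same inner product `⟪jt X, z⟫` with every
`φ X`, `X ∈ k`; since `φ` maps the finite-dimensional `k` onto itself, their difference lies in
`k` and is orthogonal to `k`.
-/

theorem Submodule.symm_apply_mem_of_forall_apply_mem {K V : Type*} [Field K] [AddCommGroup V]
    [Module K V] [FiniteDimensional K V] {k : Submodule K V} (e : V ≃ₗ[K] V)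
    (he : ∀ x ∈ k, e x ∈ k) {y : V} (hy : y ∈ k) : e.symm y ∈ k := by
  have hmap : k.map (e : V →ₗ[K] V) = k :=
    Submodule.eq_of_le_of_finrank_eq (Submodule.map_le_iff_le_comap.mpr he)
      (LinearEquiv.finrank_map_eq e k)
  obtain ⟨x, hx, rfl⟩ : y ∈ k.map (e : V →ₗ[K] V) := hmap.symm ▸ hy
  simpa using hx

section Transpose

variable {E : Type*} [NormedAddCommGroup E] [InnerProductSpace ℝ E] {h k : Submodule ℝ E}

theorem transpose_apply_eq_zero_of_mem (horth : ∀ (Z : h) (X : k), ⟪(Z : E), (X : E)⟫ = 0)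
    {j : h →ₗ[ℝ] k} {jt : E →ₗ[ℝ] h}
    (htr : ∀ (X : E) (Z : h), ⟪((jt X : h) : E), (Z : E)⟫ = ⟪X, ((j Z : k) : E)⟫) (Z : h) :
    jt (Z : E) = 0 := by
  have hself : ⟪((jt Z : h) : E), ((jt Z : h) : E)⟫ = 0 := by
    rw [htr]
    exact horth Z _
  exact Subtype.ext (inner_self_eq_zero.mp hself)

theorem eq_transpose_of_sub_mem_twisted_orthogonal
    (horth : ∀ (Z : h) (X : k), ⟪(Z : E), (X : E)⟫ = 0) {j' : h →ₗ[ℝ] k} {jt' : E →ₗ[ℝ] h}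
    (htr' : ∀ (X : E) (Z : h), ⟪((jt' X : h) : E), (Z : E)⟫ = ⟪X, ((j' Z : k) : E)⟫)
    {Y : E} (hY : Y ∈ k) (c : h)
    (hperp : ∀ Z : h, ⟪(Y - c) + ((jt' (Y - c) : h) : E), (Z : E) + ((jt' (Z : E) : h) : E)⟫ = 0) :
    c = jt' Y := by
  have hjt'_zero := transpose_apply_eq_zero_of_mem horth htr'
  have hY_perp (Z : h) : ⟪Y, (Z : E)⟫ = 0 := by
    rw [real_inner_comm]
    exact horth Z ⟨Y, hY⟩
  refine (ext_inner_right ℝ fun Z => ?_).symm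
  have hZ := hperp Z
  rw [hjt'_zero, map_sub, hjt'_zero, sub_zero, Submodule.coe_zero, add_zero, sub_add_eq_add_sub,
    inner_sub_left, inner_add_left, hY_perp, zero_add, sub_eq_zero] at hZ
  simpa only [Submodule.coe_inner] using hZ

theorem inner_transpose_apply_eq_inner_map
    {j j' : h →ₗ[ℝ] k} {jt jt' : E →ₗ[ℝ] h}
    (htr : ∀ (X : E) (Z : h), ⟪((jt X : h) : E), (Z : E)⟫ = ⟪X, ((j Z : k) : E)⟫)
    (htr' : ∀ (X : E) (Z : h), ⟪((jt' X : h) : E), (Z : E)⟫ = ⟪X, ((j' Z : k) : E)⟫)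
    (φ : E ≃ₗᵢ[ℝ] E) {C : h →ₗ[ℝ] h} (hC : ∀ Z : h, ((C Z : h) : E) = φ (Z : E))
    {X : E} (hX : C (jt X) = jt' (φ X)) (z : h) :
    ⟪((j' (C z) : k) : E), φ X⟫ = ⟪φ ((j z : k) : E), φ X⟫ :=
  calc ⟪((j' (C z) : k) : E), φ X⟫ = ⟪((C (jt X) : h) : E), ((C z : h) : E)⟫ := by
        rw [real_inner_comm, ← htr', hX]
    _ = ⟪((jt X : h) : E), (z : E)⟫ := by rw [hC, hC, φ.inner_map_map]
    _ = ⟪φ ((j z : k) : E), φ X⟫ := by rw [φ.inner_map_map, htr, real_inner_comm]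

theorem map_apply_eq_of_comp_transpose_eq [FiniteDimensional ℝ E]
    {j j' : h →ₗ[ℝ] k} {jt jt' : E →ₗ[ℝ] h}
    (htr : ∀ (X : E) (Z : h), ⟪((jt X : h) : E), (Z : E)⟫ = ⟪X, ((j Z : k) : E)⟫)
    (htr' : ∀ (X : E) (Z : h), ⟪((jt' X : h) : E), (Z : E)⟫ = ⟪X, ((j' Z : k) : E)⟫)
    (φ : E ≃ₗᵢ[ℝ] E) (hφk : ∀ X : k, φ (X : E) ∈ k)
    {C : h →ₗ[ℝ] h} (hC : ∀ Z : h, ((C Z : h) : E) = φ (Z : E))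
    (hCj : ∀ X : k, C (jt (X : E)) = jt' (φ (X : E))) (z : h) :
    φ ((j z : k) : E) = ((j' (C z) : k) : E) := by
  set D := φ ((j z : k) : E) - ((j' (C z) : k) : E)
  have hDk : D ∈ k := sub_mem (hφk (j z)) (j' (C z)).2
  have hD_perp (X : k) : ⟪D, φ (X : E)⟫ = 0 := by
    rw [inner_sub_left, inner_transpose_apply_eq_inner_map htr htr' φ hC (hCj X), sub_self]
  have hpre : φ.symm D ∈ k :=
    Submodule.symm_apply_mem_of_forall_apply_mem φ.toLinearEquiv (fun x hx => hφk ⟨x, hx⟩) hDk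
  have hDD : ⟪D, D⟫ = 0 := by
    simpa using hD_perp ⟨_, hpre⟩
  exact sub_eq_zero.mp (inner_self_eq_zero.mp hDD)

end Transpose

theorem stmt_7_general
    {g : Type*} [NormedAddCommGroup g] [InnerProductSpace ℝ g] [FiniteDimensional ℝ g]
    (h k : Submodule ℝ g)
    (horth : ∀ (Z : h) (X : k), ⟪(Z : g), (X : g)⟫ = 0)
    (j j' : h →ₗ[ℝ] k) (jt jt' : g →ₗ[ℝ] h)
    (htr : ∀ (X : g) (Z : h), ⟪((jt X : h) : g), (Z : g)⟫ = ⟪X, ((j Z : k) : g)⟫)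
    (htr' : ∀ (X : g) (Z : h), ⟪((jt' X : h) : g), (Z : g)⟫ = ⟪X, ((j' Z : k) : g)⟫)
    (φ : g ≃ₗᵢ[ℝ] g)
    (hφk : ∀ X : k, φ (X : g) ∈ k)
    (C : h →ₗ[ℝ] h) (hC : ∀ Z : h, ((C Z : h) : g) = φ (Z : g))
    -- for every X ∈ k, φ(X) - C(jᵗ X) lies in the g_{j'}-orthogonal complement of h
    (hmain : ∀ X : k, ∀ Z : h,
      ⟪(φ (X : g) - ((C (jt (X : g)) : h) : g)) +
          ((jt' (φ (X : g) - ((C (jt (X : g)) : h) : g)) : h) : g),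
        (Z : g) + ((jt' (Z : g) : h) : g)⟫ = 0) :
    (∀ X : k, C (jt (X : g)) = jt' (φ (X : g))) ∧
    (∀ z : h, ((j z : k) : g) = φ.symm ((j' (C z) : k) : g)) := by
  have hCj (X : k) : C (jt (X : g)) = jt' (φ (X : g)) :=
    eq_transpose_of_sub_mem_twisted_orthogonal horth htr' (hφk X) _ (hmain X)
  refine ⟨hCj, fun z => ?_⟩
  rw [φ.eq_symm_apply]
  exact map_apply_eq_of_comp_transpose_eq htr htr' φ hφk hC hCj z

/-- Key linear-algebra step of Lemma 4.4.  If `φ` is a `g0`-isometry of `g`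
preserving `h` and `k`, carrying the `g_j`-orthogonal complement of `h` onto the
`g_{j'}`-orthogonal complement of `h`, with `C = φ|_h`, and for every `X ∈ k` the vector
`φ(X) - C(jᵗ X)` lies in the `g_{j'}`-orthogonal complement of `h`, then
`C ∘ jᵗ = j'ᵗ ∘ φ` on `k` and `j(z) = φ⁻¹(j'(Cz))` for all `z ∈ h`. -/
theorem stmt_7
    {g : Type*} [NormedAddCommGroup g] [InnerProductSpace ℝ g] [FiniteDimensional ℝ g]
    (h k : Submodule ℝ g)
    (horth : ∀ (Z : h) (X : k), ⟪(Z : g), (X : g)⟫ = 0)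
    (j j' : h →ₗ[ℝ] k) (jt jt' : g →ₗ[ℝ] h)
    (htr : ∀ (X : g) (Z : h), ⟪((jt X : h) : g), (Z : g)⟫ = ⟪X, ((j Z : k) : g)⟫)
    (htr' : ∀ (X : g) (Z : h), ⟪((jt' X : h) : g), (Z : g)⟫ = ⟪X, ((j' Z : k) : g)⟫)
    (φ : g ≃ₗᵢ[ℝ] g)
    (hφh : ∀ Z : h, φ (Z : g) ∈ h) (hφk : ∀ X : k, φ (X : g) ∈ k)
    (C : h →ₗ[ℝ] h) (hC : ∀ Z : h, ((C Z : h) : g) = φ (Z : g))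
    -- φ maps the g_j-orthogonal complement of h onto the g_{j'}-orthogonal complement of h
    (hperp : ∀ W : g, (∀ Z : h, ⟪W + ((jt W : h) : g), (Z : g) + ((jt (Z : g) : h) : g)⟫ = 0) →
      (∀ Z : h, ⟪φ W + ((jt' (φ W) : h) : g), (Z : g) + ((jt' (Z : g) : h) : g)⟫ = 0))
    -- for every X ∈ k, φ(X) - C(jᵗ X) lies in the g_{j'}-orthogonal complement of h
    (hmain : ∀ X : k, ∀ Z : h,
      ⟪(φ (X : g) - ((C (jt (X : g)) : h) : g)) +
          ((jt' (φ (X : g) - ((C (jt (X : g)) : h) : g)) : h) : g),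
        (Z : g) + ((jt' (Z : g) : h) : g)⟫ = 0) :
    (∀ X : k, C (jt (X : g)) = jt' (φ (X : g))) ∧
    (∀ z : h, ((j z : k) : g) = φ.symm ((j' (C z) : k) : g)) :=
  stmt_7_general h k horth j j' jt jt' htr htr' φ hφk C hC hmain
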